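/- Suppose h: ℝ^d → ℝ is convex with minimizer x*, and for the current iterate x with h(x) ≤ h(x^(0)) we have ‖Ax − Ax*‖_∞ ≤ R. Suppose Δ̃ satisfies ‖AΔ̃‖_∞ ≤ 1/C and res_x(Δ̃) ≥ κ·max_{‖AΔ‖_∞ ≤ 1/C} res_x(Δ), where res_x(Δ) = ∇f(x)ᵀ(AΔ) − (1/e)(AΔ)ᵀ∇²f(x)(AΔ) and h(x) = Σᵢ f((Ax−b)ᵢ) with f C-QSC. Then h(x − Δ̃/e²) − h(x*) ≤ (1 − κ/(e²CR))·(h(x) − h(x*)). -/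

import Mathlib

/-!
Quasi-self-concordance `|f'''| ≤ C f''` integrates (Grönwall) to `f''(t) e^{-C|s|} ≤ f''(t + s) ≤
f''(t) e^{C|s|}`, so on steps of length at most `1/C` the function `f` is squeezed between the
second-order Taylor models with curvature `f''(t)/e` and `(e - 2) f''(t)`. Summing over the rows of
`A`, the lower model gives `h(x - Δ) ≥ h(x) - res_x(Δ)` and the upper one gives
`h(x - Δ̃/e²) ≤ h(x) - res_x(Δ̃)/e²`. Taking `Δ = (r/R)(x - x*)` with `r = 1/C`, convexity of `h`
gives `res_x(Δ) ≥ (r/R)(h(x) - h(x*))`, and `Δ̃` captures a `κ` fraction of that.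
-/

open Set Real Matrix

theorem le_mul_exp_of_deriv_le {g g' : ℝ → ℝ} {C a b : ℝ} (hg : ∀ t, HasDerivAt g (g' t) t)
    (hbound : ∀ t, g' t ≤ C * g t) (hab : a ≤ b) : g b ≤ g a * exp (C * (b - a)) := by
  have := le_gronwallBound_of_liminf_deriv_right_le (δ := g a) (K := C) (ε := 0)
    (fun t _ => (hg t).continuousAt.continuousWithinAt)
    (fun t _ _ hr => (hg t).hasDerivWithinAt.liminf_right_slope_le hr) le_rfl
    (fun t _ => by simpa using hbound t) b ⟨hab, le_rfl⟩
  rwa [gronwallBound_ε0] at this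

theorem le_mul_exp_abs_of_abs_deriv_le {g g' : ℝ → ℝ} {C : ℝ}
    (hg : ∀ t, HasDerivAt g (g' t) t) (hbound : ∀ t, |g' t| ≤ C * g t) (a b : ℝ) :
    g b ≤ g a * exp (C * |b - a|) := by
  rcases le_total a b with hab | hba
  · rw [abs_of_nonneg (sub_nonneg.2 hab)]
    exact le_mul_exp_of_deriv_le hg (fun t => (abs_le.1 (hbound t)).2) hab
  · rw [abs_of_nonpos (sub_nonpos.2 hba)]
    have hg_neg : ∀ t, HasDerivAt (fun s => g (-s)) (-g' (-t)) t := fun t =>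
      ((hg (-t)).comp t (hasDerivAt_neg t)).congr_deriv (mul_neg_one _)
    have := le_mul_exp_of_deriv_le (C := C) hg_neg
      (fun t => by linarith [(abs_le.1 (hbound (-t))).1]) (neg_le_neg hba)
    simpa [neg_add_eq_sub] using this

theorem image_le_of_deriv2_le {F F' F'' G G' G'' : ℝ → ℝ} {a b : ℝ}
    (hF : ∀ t, HasDerivAt F (F' t) t) (hF' : ∀ t, HasDerivAt F' (F'' t) t)
    (hG : ∀ t, HasDerivAt G (G' t) t) (hG' : ∀ t, HasDerivAt G' (G'' t) t)
    (ha : F a ≤ G a) (ha' : F' a ≤ G' a) (hbound : ∀ t ∈ Ico a b, F'' t ≤ G'' t) :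
    ∀ ⦃t⦄, t ∈ Icc a b → F t ≤ G t := by
  have hcont : ∀ {u u' : ℝ → ℝ}, (∀ t, HasDerivAt u (u' t) t) → ContinuousOn u (Icc a b) :=
    fun hu t _ => (hu t).continuousAt.continuousWithinAt
  have hderiv' : ∀ t ∈ Icc a b, F' t ≤ G' t :=
    image_le_of_deriv_right_le_deriv_boundary (hcont hF') (fun t _ => (hF' t).hasDerivWithinAt)
      ha' (hcont hG') (fun t _ => (hG' t).hasDerivWithinAt) hbound
  exact image_le_of_deriv_right_le_deriv_boundary (hcont hF) (fun t _ => (hF t).hasDerivWithinAt)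
    ha (hcont hG) (fun t _ => (hG t).hasDerivWithinAt)
    fun t ht => hderiv' t (Ico_subset_Icc_self ht)

theorem hasDerivAt_comp_const_add_mul {u u' : ℝ → ℝ} (hu : ∀ t, HasDerivAt u (u' t) t)
    (t v τ : ℝ) : HasDerivAt (fun τ => u (t + τ * v)) (u' (t + τ * v) * v) τ :=
  (hu _).comp τ (((hasDerivAt_id τ).mul_const v).const_add t |>.congr_deriv (one_mul v))

namespace QSC

variable {f f' f'' f''' : ℝ → ℝ} {C : ℝ}
  (hf : ∀ t, HasDerivAt f (f' t) t) (hf' : ∀ t, HasDerivAt f' (f'' t) t)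
  (hf'' : ∀ t, HasDerivAt f'' (f''' t) t) (hqsc : ∀ t, |f''' t| ≤ C * f'' t)

include hqsc in
theorem second_deriv_nonneg (hC : 0 < C) (t : ℝ) : 0 ≤ f'' t :=
  (mul_nonneg_iff_of_pos_left hC).1 ((abs_nonneg _).trans (hqsc t))

include hf'' hqsc

theorem second_deriv_add_bounds (hC : 0 < C) {τ : ℝ} (t s : ℝ) (hs : C * |s| ≤ τ) :
    f'' t * exp (-τ) ≤ f'' (t + s) ∧ f'' (t + s) ≤ f'' t * exp τ := by
  have hexp : exp (C * |s|) ≤ exp τ := exp_le_exp.2 hs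
  have hnonneg := second_deriv_nonneg hqsc hC
  constructor
  · have := le_mul_exp_abs_of_abs_deriv_le hf'' hqsc (t + s) t
    rw [sub_add_cancel_left, abs_neg] at this
    rw [← le_div_iff₀ (exp_pos _), exp_neg, div_inv_eq_mul]
    exact this.trans (by gcongr; exact hnonneg _)
  · have := le_mul_exp_abs_of_abs_deriv_le hf'' hqsc t (t + s)
    rw [add_sub_cancel_left] at this
    exact this.trans (by gcongr; exact hnonneg _)

include hf hf'

theorem lower_taylor_bound (hC : 0 < C) (t v : ℝ) (hv : |v| ≤ 1 / C) :
    f t + f' t * v + f'' t * v ^ 2 / exp 1 ≤ f (t + v) := by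
  have hCv : C * |v| ≤ 1 := by rwa [le_div_iff₀' hC] at hv
  have key := image_le_of_deriv2_le (a := 0) (b := 1)
    (F := fun τ => f t + f' t * (τ * v) + f'' t * v ^ 2 * (exp (-τ) + τ - 1))
    (F' := fun τ => f' t * v + f'' t * v ^ 2 * (1 - exp (-τ)))
    (F'' := fun τ => f'' t * v ^ 2 * exp (-τ))
    (G := fun τ => f (t + τ * v)) (G' := fun τ => f' (t + τ * v) * v)
    (G'' := fun τ => f'' (t + τ * v) * v * v)
    (fun τ => by
      have := ((((hasDerivAt_id τ).mul_const v).const_mul (f' t)).const_add (f t)).add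
        ((((hasDerivAt_neg τ).exp.add (hasDerivAt_id τ)).sub_const 1).const_mul (f'' t * v ^ 2))
      exact this.congr_deriv (by ring))
    (fun τ => by
      have := (((hasDerivAt_neg τ).exp.const_sub 1).const_mul (f'' t * v ^ 2)).const_add (f' t * v)
      exact this.congr_deriv (by ring))
    (hasDerivAt_comp_const_add_mul hf t v)
    (fun τ => (hasDerivAt_comp_const_add_mul hf' t v τ).mul_const v)
    (by simp) (by simp) (fun τ hτ => by
      have := (second_deriv_add_bounds hf'' hqsc hC (τ := τ) t (τ * v)
        (by rw [abs_mul, abs_of_nonneg hτ.1]; nlinarith [mul_nonneg hτ.1 (sub_nonneg.2 hCv)])).1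
      calc f'' t * v ^ 2 * exp (-τ) = f'' t * exp (-τ) * v ^ 2 := by ring
        _ ≤ f'' (t + τ * v) * v ^ 2 := by gcongr
        _ = _ := by ring) (right_mem_Icc.2 zero_le_one)
  simpa [exp_neg, div_eq_mul_inv] using key

theorem upper_taylor_bound (hC : 0 < C) (t v : ℝ) (hv : |v| ≤ 1 / C) :
    f (t + v) ≤ f t + f' t * v + f'' t * v ^ 2 * (exp 1 - 2) := by
  have hCv : C * |v| ≤ 1 := by rwa [le_div_iff₀' hC] at hv
  have key := image_le_of_deriv2_le (a := 0) (b := 1)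
    (F := fun τ => f (t + τ * v)) (F' := fun τ => f' (t + τ * v) * v)
    (F'' := fun τ => f'' (t + τ * v) * v * v)
    (G := fun τ => f t + f' t * (τ * v) + f'' t * v ^ 2 * (exp τ - τ - 1))
    (G' := fun τ => f' t * v + f'' t * v ^ 2 * (exp τ - 1))
    (G'' := fun τ => f'' t * v ^ 2 * exp τ)
    (hasDerivAt_comp_const_add_mul hf t v)
    (fun τ => (hasDerivAt_comp_const_add_mul hf' t v τ).mul_const v)
    (fun τ => by
      have := ((((hasDerivAt_id τ).mul_const v).const_mul (f' t)).const_add (f t)).add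
        ((((hasDerivAt_exp τ).sub (hasDerivAt_id τ)).sub_const 1).const_mul (f'' t * v ^ 2))
      exact this.congr_deriv (by ring))
    (fun τ => by
      have := (((hasDerivAt_exp τ).sub_const 1).const_mul (f'' t * v ^ 2)).const_add (f' t * v)
      exact this.congr_deriv (by ring))
    (by simp) (by simp) (fun τ hτ => by
      have := (second_deriv_add_bounds hf'' hqsc hC (τ := τ) t (τ * v)
        (by rw [abs_mul, abs_of_nonneg hτ.1]; nlinarith [mul_nonneg hτ.1 (sub_nonneg.2 hCv)])).2
      calc f'' (t + τ * v) * v * v = f'' (t + τ * v) * v ^ 2 := by ring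
        _ ≤ f'' t * exp τ * v ^ 2 := by gcongr
        _ = _ := by ring) (right_mem_Icc.2 zero_le_one)
  simpa [sub_sub, one_add_one_eq_two] using key

variable {ι : Type*} [Fintype ι]

omit hf hf' hf'' hqsc in
/-- The residual `res_x(Δ)` of the paper, written in terms of `y = Ax - b` and `w = AΔ`. -/
noncomputable def residual (f' f'' : ℝ → ℝ) (y w : ι → ℝ) : ℝ :=
  ∑ i, f' (y i) * w i - (exp 1)⁻¹ * ∑ i, f'' (y i) * w i ^ 2

theorem sum_sub_residual_le (hC : 0 < C) (y w : ι → ℝ) (hw : ‖w‖ ≤ 1 / C) :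
    ∑ i, f (y i) - residual f' f'' y w ≤ ∑ i, f ((y - w) i) := by
  have hcoord : ∀ i, f (y i) - (f' (y i) * w i - (exp 1)⁻¹ * (f'' (y i) * w i ^ 2))
      ≤ f ((y - w) i) := fun i => by
    have := lower_taylor_bound hf hf' hf'' hqsc hC (y i) (-w i)
      (by rw [abs_neg, ← Real.norm_eq_abs]; exact (norm_le_pi_norm w i).trans hw)
    rw [Pi.sub_apply, sub_eq_add_neg (y i)]
    linarith [show f'' (y i) * (-w i) ^ 2 / exp 1 = (exp 1)⁻¹ * (f'' (y i) * w i ^ 2) by ring]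
  calc ∑ i, f (y i) - residual f' f'' y w
      = ∑ i, (f (y i) - (f' (y i) * w i - (exp 1)⁻¹ * (f'' (y i) * w i ^ 2))) := by
        simp only [residual, Finset.sum_sub_distrib, Finset.mul_sum]
    _ ≤ _ := Finset.sum_le_sum fun i _ => hcoord i

theorem sum_sub_smul_le (hC : 0 < C) (y w : ι → ℝ) (hw : ‖w‖ ≤ 1 / C) :
    ∑ i, f ((y - (exp 1 ^ 2)⁻¹ • w) i) ≤
      ∑ i, f (y i) - (exp 1 ^ 2)⁻¹ * residual f' f'' y w := by
  set c := (exp 1 ^ 2)⁻¹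
  have hc : c ≤ 1 := inv_le_one_of_one_le₀ (one_le_pow₀ (one_le_exp zero_le_one))
  have hquad : (exp 1 - 2) * c ^ 2 ≤ c * (exp 1)⁻¹ := by
    have he := exp_pos 1
    rw [show c * (exp 1)⁻¹ = exp 1 * c ^ 2 by simp only [c]; field_simp]
    gcongr
    linarith
  have hcoord : ∀ i, f ((y - c • w) i)
      ≤ f (y i) - c * (f' (y i) * w i - (exp 1)⁻¹ * (f'' (y i) * w i ^ 2)) := fun i => by
    have hwi : |w i| ≤ 1 / C := by rw [← Real.norm_eq_abs]; exact (norm_le_pi_norm w i).trans hw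
    have := upper_taylor_bound hf hf' hf'' hqsc hC (y i) (-(c * w i))
      (by rw [abs_neg, abs_mul, abs_of_pos (by positivity)]; nlinarith [abs_nonneg (w i)])
    rw [Pi.sub_apply, Pi.smul_apply, smul_eq_mul, sub_eq_add_neg (y i)]
    have := mul_le_mul_of_nonneg_left hquad
      (mul_nonneg (second_deriv_nonneg hqsc hC (y i)) (sq_nonneg (w i)))
    nlinarith
  calc ∑ i, f ((y - c • w) i)
      ≤ ∑ i, (f (y i) - c * (f' (y i) * w i - (exp 1)⁻¹ * (f'' (y i) * w i ^ 2))) :=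
        Finset.sum_le_sum fun i _ => hcoord i
    _ = _ := by simp only [residual, Finset.sum_sub_distrib, Finset.mul_sum, mul_sub]

end QSC

theorem ContDiff.hasDerivAt_iteratedDeriv {𝕜 F : Type*} [NontriviallyNormedField 𝕜]
    [NormedAddCommGroup F] [NormedSpace 𝕜 F] {f : 𝕜 → F} {n : WithTop ℕ∞} {k : ℕ}
    (hf : ContDiff 𝕜 n f) (hk : k < n) (t : 𝕜) :
    HasDerivAt (iteratedDeriv k f) (iteratedDeriv (k + 1) f t) t := by
  rw [iteratedDeriv_succ]
  exact (hf.differentiable_iteratedDeriv k hk t).hasDerivAt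

theorem ContDiff.hasDerivAt_iteratedDeriv_of_three {f : ℝ → ℝ} (hf : ContDiff ℝ 3 f) :
    (∀ t, HasDerivAt f (deriv f t) t) ∧ (∀ t, HasDerivAt (deriv f) (iteratedDeriv 2 f t) t) ∧
      ∀ t, HasDerivAt (iteratedDeriv 2 f) (iteratedDeriv 3 f t) t := by
  refine ⟨?_, ?_, hf.hasDerivAt_iteratedDeriv (k := 2) (by norm_num)⟩
  · simpa using hf.hasDerivAt_iteratedDeriv (k := 0) (by norm_num)
  · simpa [iteratedDeriv_one] using hf.hasDerivAt_iteratedDeriv (k := 1) (by norm_num)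

theorem ConvexOn.apply_sub_smul_sub_le {E : Type*} [AddCommGroup E] [Module ℝ E] {h : E → ℝ}
    (hh : ConvexOn ℝ univ h) {θ : ℝ} (hθ : θ ∈ Icc (0 : ℝ) 1) (x y : E) :
    h (x - θ • (x - y)) ≤ h x - θ * (h x - h y) := by
  have hcomb : x - θ • (x - y) = (1 - θ) • x + θ • y := by module
  have := hh.2 (mem_univ x) (mem_univ y) (sub_nonneg.2 hθ.2) hθ.1 (sub_add_cancel 1 θ)
  rw [hcomb]
  simp only [smul_eq_mul] at this
  linarith

theorem norm_mulVec_smul_sub_le {m n : Type*} [Fintype m] [Fintype n]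
    (A : Matrix m n ℝ) {θ R : ℝ} (hθ : 0 ≤ θ) {x y : n → ℝ} (hxy : ‖A *ᵥ x - A *ᵥ y‖ ≤ R) :
    ‖A *ᵥ (θ • (x - y))‖ ≤ θ * R := by
  rw [mulVec_smul, mulVec_sub, norm_smul, Real.norm_of_nonneg hθ]
  gcongr

theorem qsc_progress_general {n d : ℕ} (C R κ : ℝ) (hC : 0 < C) (hκ : 0 < κ)
    (hCR : 1 / C ≤ R)
    (f : ℝ → ℝ) (hf : ContDiff ℝ 3 f)
    (hqsc : ∀ t : ℝ, |iteratedDeriv 3 f t| ≤ C * iteratedDeriv 2 f t)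
    (A : Matrix (Fin n) (Fin d) ℝ) (b : Fin n → ℝ)
    (h : (Fin d → ℝ) → ℝ)
    (hh : ∀ z, h z = ∑ i, f ((A.mulVec z - b) i))
    (hconvh : ConvexOn ℝ Set.univ h)
    (res : (Fin d → ℝ) → (Fin d → ℝ) → ℝ)
    (hres : ∀ x Δ : Fin d → ℝ, res x Δ =
      (∑ i, deriv f ((A.mulVec x - b) i) * A.mulVec Δ i) -
        (Real.exp 1)⁻¹ * ∑ i, iteratedDeriv 2 f ((A.mulVec x - b) i) * (A.mulVec Δ i) ^ 2)
    (xstar : Fin d → ℝ)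
    (x : Fin d → ℝ)
    (hdiam : ‖A.mulVec x - A.mulVec xstar‖ ≤ R)
    (Δt : Fin d → ℝ) (hΔt : ‖A.mulVec Δt‖ ≤ 1 / C)
    (happrox : ∀ Δ : Fin d → ℝ, ‖A.mulVec Δ‖ ≤ 1 / C → κ * res x Δ ≤ res x Δt) :
    h (x - (Real.exp 1 ^ 2)⁻¹ • Δt) - h xstar ≤
      (1 - κ / (Real.exp 1 ^ 2 * C * R)) * (h x - h xstar) := by
  obtain ⟨hf₀, hf₁, hf₂⟩ := hf.hasDerivAt_iteratedDeriv_of_three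
  have hR : 0 < R := (one_div_pos.2 hC).trans_le hCR
  set θ := 1 / (C * R)
  have hθ : θ ∈ Icc (0 : ℝ) 1 :=
    ⟨by positivity, by rw [div_le_one (by positivity)]; rwa [div_le_iff₀' hC] at hCR⟩
  have hΔθ : ‖A *ᵥ (θ • (x - xstar))‖ ≤ 1 / C :=
    (norm_mulVec_smul_sub_le A hθ.1 hdiam).trans_eq (by simp only [θ]; field_simp)
  have hlower : ∀ Δ, ‖A *ᵥ Δ‖ ≤ 1 / C → h x - res x Δ ≤ h (x - Δ) := fun Δ hΔ => by
    rw [hh, hh, hres, mulVec_sub, sub_right_comm]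
    exact QSC.sum_sub_residual_le hf₀ hf₁ hf₂ hqsc hC _ _ hΔ
  have hstep : h (x - (exp 1 ^ 2)⁻¹ • Δt) ≤ h x - (exp 1 ^ 2)⁻¹ * res x Δt := by
    rw [hh, hh, hres, mulVec_sub, mulVec_smul, sub_right_comm]
    exact QSC.sum_sub_smul_le hf₀ hf₁ hf₂ hqsc hC _ _ hΔt
  have hgain : κ * (θ * (h x - h xstar)) ≤ res x Δt :=
    calc κ * (θ * (h x - h xstar)) ≤ κ * res x (θ • (x - xstar)) := by
          gcongr
          linarith [hlower _ hΔθ, hconvh.apply_sub_smul_sub_le hθ x xstar]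
      _ ≤ res x Δt := happrox _ hΔθ
  have hrate : (exp 1 ^ 2)⁻¹ * (κ * θ) = κ / (exp 1 ^ 2 * C * R) := by
    simp only [θ]; field_simp
  calc h (x - (exp 1 ^ 2)⁻¹ • Δt) - h xstar ≤ h x - (exp 1 ^ 2)⁻¹ * res x Δt - h xstar := by
        linarith
    _ ≤ h x - (exp 1 ^ 2)⁻¹ * (κ * (θ * (h x - h xstar))) - h xstar := by gcongr
    _ = (1 - κ / (exp 1 ^ 2 * C * R)) * (h x - h xstar) := by rw [← hrate]; ring

/-- Progress lemma: if `Δ̃` is a `κ`-approximate maximizer of the residual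
`res_x(Δ) = ∇f(x)ᵀ(AΔ) - (1/e)(AΔ)ᵀ∇²f(x)(AΔ)` over `{Δ : ‖AΔ‖_∞ ≤ 1/C}`, then
the step `x - Δ̃/e²` reduces the optimality gap by the factor `1 - κ/(e² C R)`. -/
theorem qsc_progress {n d : ℕ} (C R κ : ℝ) (hC : 0 < C) (hκ : 0 < κ) (hκ1 : κ ≤ 1)
    (hCR : 1 / C ≤ R)
    (f : ℝ → ℝ) (hf : ContDiff ℝ 3 f) (hconv : ConvexOn ℝ Set.univ f)
    (hqsc : ∀ t : ℝ, |iteratedDeriv 3 f t| ≤ C * iteratedDeriv 2 f t)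
    (A : Matrix (Fin n) (Fin d) ℝ) (b : Fin n → ℝ)
    (h : (Fin d → ℝ) → ℝ)
    (hh : ∀ z, h z = ∑ i, f ((A.mulVec z - b) i))
    (hconvh : ConvexOn ℝ Set.univ h)
    (res : (Fin d → ℝ) → (Fin d → ℝ) → ℝ)
    (hres : ∀ x Δ : Fin d → ℝ, res x Δ =
      (∑ i, deriv f ((A.mulVec x - b) i) * A.mulVec Δ i) -
        (Real.exp 1)⁻¹ * ∑ i, iteratedDeriv 2 f ((A.mulVec x - b) i) * (A.mulVec Δ i) ^ 2)
    (xstar : Fin d → ℝ) (hmin : ∀ y : Fin d → ℝ, h xstar ≤ h y)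
    (x0 x : Fin d → ℝ) (hlevel : h x ≤ h x0)
    (hdiam : ‖A.mulVec x - A.mulVec xstar‖ ≤ R)
    (Δt : Fin d → ℝ) (hΔt : ‖A.mulVec Δt‖ ≤ 1 / C)
    (happrox : ∀ Δ : Fin d → ℝ, ‖A.mulVec Δ‖ ≤ 1 / C → κ * res x Δ ≤ res x Δt) :
    h (x - (Real.exp 1 ^ 2)⁻¹ • Δt) - h xstar ≤
      (1 - κ / (Real.exp 1 ^ 2 * C * R)) * (h x - h xstar) :=
  qsc_progress_general C R κ hC hκ hCR f hf hqsc A b h hh hconvh res hres xstar x hdiam Δt hΔt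
    happrox
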